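/- Let H be a ℂ-vector space, A a unital associative ℂ-algebra, N ≥ 2, Ψ : H → A a ℂ-linear map, v₀ ∈ H, and let T, Ŝ be N×N matrices of ℂ-linear endomorphisms of H and K an N×N matrix over A satisfying the KT-relation: for all h ∈ H and 1 ≤ i,j ≤ N, Σ_{k=1}^{N} K_{i,k} · Ψ(T_{k,j} h) = Σ_{k=1}^{N} Ψ(Ŝ_{i,k} h) · K_{k,j}. Assume: T_{i,j} v₀ = 0 for i > j; Ŝ_{i,j} v₀ = 0 for i < j; T_{1,1} v₀ = λ₁ v₀, T_{2,2} v₀ = λ₂ v₀ and Ŝ_{1,1} v₀ = λ₁ v₀ for scalars λ₁, λ₂ ∈ ℂ with λ₁ ≠ 0 and λ₂ ≠ 0; and K_{1,1} is invertible in A. Set B := Ψ(v₀). Then Ψ(T_{1,2} v₀) = λ₁ · B · K_{1,1}⁻¹ · K_{1,2} − λ₂ · K_{1,1}⁻¹ · K_{1,2} · B. -/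
import Mathlib


/-- The one-excitation overlap formula (equation (C.32) of the paper):
`Ψ(T_{1,2} v₀) = λ₁ · B K_{1,1}⁻¹ K_{1,2} − λ₂ · K_{1,1}⁻¹ K_{1,2} B`
with `B = Ψ(v₀)` the vacuum overlap. -/
theorem stmt_18 {H A : Type*} [AddCommGroup H] [Module ℂ H] [Ring A] [Algebra ℂ A]
    (N : ℕ) (hN : 2 ≤ N)
    (Ψ : H →ₗ[ℂ] A) (v₀ : H)
    (T Shat : Fin N → Fin N → (H →ₗ[ℂ] H))
    (K : Fin N → Fin N → A)
    (hKT : ∀ (h : H) (i j : Fin N),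
      ∑ k, K i k * Ψ ((T k j) h) = ∑ k, Ψ ((Shat i k) h) * K k j)
    (hT : ∀ i j : Fin N, j < i → (T i j) v₀ = 0)
    (hS : ∀ i j : Fin N, i < j → (Shat i j) v₀ = 0)
    (lam1 lam2 : ℂ)
    (h11 : (T ⟨0, by omega⟩ ⟨0, by omega⟩) v₀ = lam1 • v₀)
    (h22 : (T ⟨1, by omega⟩ ⟨1, by omega⟩) v₀ = lam2 • v₀)
    (hS11 : (Shat ⟨0, by omega⟩ ⟨0, by omega⟩) v₀ = lam1 • v₀)
    (hlam1 : lam1 ≠ 0) (hlam2 : lam2 ≠ 0)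
    (Kinv : A)
    (hKinv₁ : Kinv * K ⟨0, by omega⟩ ⟨0, by omega⟩ = 1)
    (hKinv₂ : K ⟨0, by omega⟩ ⟨0, by omega⟩ * Kinv = 1) :
    Ψ ((T ⟨0, by omega⟩ ⟨1, by omega⟩) v₀) =
      lam1 • (Ψ v₀ * Kinv * K ⟨0, by omega⟩ ⟨1, by omega⟩)
        - lam2 • (Kinv * K ⟨0, by omega⟩ ⟨1, by omega⟩ * Ψ v₀) := by
  have h0 : (0 : ℕ) < N := by omega
  have h1 : (1 : ℕ) < N := by omega
  set e0 : Fin N := ⟨0, h0⟩ with he0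
  set e1 : Fin N := ⟨1, h1⟩ with he1
  have hne : e0 ≠ e1 := by simp [he0, he1, Fin.ext_iff]
  set B := Ψ v₀ with hB
  -- Step 1: K₀₀ commutes with B
  have key0 := hKT v₀ e0 e0
  have L0 : ∑ k, K e0 k * Ψ ((T k e0) v₀) = lam1 • (K e0 e0 * B) := by
    rw [Fintype.sum_eq_single e0]
    · rw [h11]; simp [hB, mul_smul_comm]
    · intro k hk
      have hk' : (0:ℕ) < k.val := by
        have : k.val ≠ 0 := fun h => hk (Fin.ext h)
        omega
      rw [hT k e0 hk']
      simp
  have R0 : ∑ k, Ψ ((Shat e0 k) v₀) * K k e0 = lam1 • (B * K e0 e0) := by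
    rw [Fintype.sum_eq_single e0]
    · rw [hS11]; simp [hB, smul_mul_assoc]
    · intro k hk
      have hk' : (0:ℕ) < k.val := by
        have : k.val ≠ 0 := fun h => hk (Fin.ext h)
        omega
      rw [hS e0 k hk']
      simp
  have hcomm : K e0 e0 * B = B * K e0 e0 := by
    have := L0.symm.trans (key0.trans R0)
    exact smul_right_injective A hlam1 this
  have hcomm' : Kinv * B = B * Kinv := by
    calc Kinv * B = Kinv * B * (K e0 e0 * Kinv) := by rw [hKinv₂, mul_one]
    _ = Kinv * (B * K e0 e0) * Kinv := by simp [mul_assoc]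
    _ = Kinv * (K e0 e0 * B) * Kinv := by rw [hcomm]
    _ = (Kinv * K e0 e0) * (B * Kinv) := by simp [mul_assoc]
    _ = B * Kinv := by rw [hKinv₁, one_mul]
  -- Step 2: KT at (0,1)
  have key1 := hKT v₀ e0 e1
  have L1 : ∑ k, K e0 k * Ψ ((T k e1) v₀)
      = K e0 e0 * Ψ ((T e0 e1) v₀) + lam2 • (K e0 e1 * B) := by
    rw [Fintype.sum_eq_add e0 e1 hne]
    · rw [h22]; simp [hB, mul_smul_comm]
    · intro k hk
      obtain ⟨hk0, hk1⟩ := hk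
      have ha : k.val ≠ 0 := fun h => hk0 (Fin.ext h)
      have hb : k.val ≠ 1 := fun h => hk1 (Fin.ext h)
      have hk' : (1:ℕ) < k.val := by omega
      rw [hT k e1 hk']
      simp
  have R1 : ∑ k, Ψ ((Shat e0 k) v₀) * K k e1 = lam1 • (B * K e0 e1) := by
    rw [Fintype.sum_eq_single e0]
    · rw [hS11]; simp [hB, smul_mul_assoc]
    · intro k hk
      have hk' : (0:ℕ) < k.val := by
        have : k.val ≠ 0 := fun h => hk (Fin.ext h)
        omega
      rw [hS e0 k hk']
      simp
  rw [L1, R1] at key1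
  have step : K e0 e0 * Ψ ((T e0 e1) v₀)
      = lam1 • (B * K e0 e1) - lam2 • (K e0 e1 * B) := by
    rw [← key1]; abel
  have : Ψ ((T e0 e1) v₀) = Kinv * (K e0 e0 * Ψ ((T e0 e1) v₀)) := by
    rw [← mul_assoc, hKinv₁, one_mul]
  rw [this, step, mul_sub, mul_smul_comm, mul_smul_comm, ← mul_assoc, ← mul_assoc,
    hcomm']
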